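/- For all n ≥ 0, a_{n+2} = Q_n, where Q_n is the number of (n+3)-color binary partitions of n into distinct parts; concretely, Q_n is the number of finite sets S of pairs (i, c) of nonnegative integers satisfying c ≤ i + 2 (a part 2^i may carry any of i+3 colors) such that Σ_{(i,c) ∈ S} 2^i = n. -/

import Mathlib

/-- `pre2 s` is the multiset of all pairwise products of two distinct entries
(by position) of the multiset `s`, i.e. the summands of `e₂` evaluated at `s`. -/
def pre2 (s : Multiset ℕ) : Multiset ℕ := (Multiset.powersetCard 2 s).map Multiset.prod

open Classical in
/-- The finset of binary partitions of `n`: partitions all of whose parts are powers of 2. -/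
noncomputable def binaryPartitions (n : ℕ) : Finset (Nat.Partition n) :=
  Finset.univ.filter fun l => ∀ p ∈ l.parts, ∃ i : ℕ, p = 2 ^ i

/-- `a n = m₁(ImB₂(n))`: the total number of parts equal to 1 in the image of `pre2`
on binary partitions of `n` with at least two parts; by injectivity this equals
`∑_{λ ∈ B(n)} C(m₁(λ), 2)`. -/
noncomputable def a (n : ℕ) : ℕ :=
  ∑ l ∈ binaryPartitions n, Nat.choose (l.parts.count 1) 2

/-!
Both `a (n + 2)` and `Q n` are the `n`-th coefficient of `E(q) / (1 - q)³`, where `E(q)` counts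
binary partitions without parts `1`. Deleting the `m` ones of a binary partition leaves one without
ones, so `∑ aₙ qⁿ = (∑ C(m, 2) qᵐ) E(q) = q² E(q) / (1 - q)³`. In a coloured set, the parts of
colour `0` are the binary digits of an arbitrary number, so each of the colours `0, 1, 2`
contributes a factor `1 / (1 - q)`, and what remains is a set of parts `2 ^ i` in colours `c < i`.
Such sets are counted by `E(q)` as well, because both families satisfy `E(q) = E(q²) / (1 - q²)`:
halving the parts leads to a family with generating function `E(q) / (1 - q)`, by removing the
ones, resp. the parts of colour `0`.
-/

open Finset PowerSeries

namespace Nat.Partition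

def addOnes {m : ℕ} (μ : m.Partition) (c : ℕ) : (m + c).Partition where
  parts := μ.parts + Multiset.replicate c 1
  parts_pos hi := by
    rcases Multiset.mem_add.mp hi with h | h
    · exact μ.parts_pos h
    · rw [Multiset.eq_of_mem_replicate h]; exact Nat.one_pos
  parts_sum := by simp [μ.parts_sum]

def double {j : ℕ} (μ : j.Partition) : (2 * j).Partition where
  parts := μ.parts.map (2 * ·)
  parts_pos hi := by
    obtain ⟨x, hx, rfl⟩ := Multiset.mem_map.mp hi
    have := μ.parts_pos hx
    omega
  parts_sum := by rw [Multiset.sum_map_mul_left, Multiset.map_id', μ.parts_sum]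

end Nat.Partition

theorem Multiset.count_one_add_sum_filter_ne_one (s : Multiset ℕ) :
    s.count 1 + (s.filter (· ≠ 1)).sum = s.sum := by
  conv_rhs => rw [← Multiset.filter_add_not (· = 1) s, Multiset.filter_eq']
  simp

theorem mem_binaryPartitions {n : ℕ} {l : n.Partition} :
    l ∈ binaryPartitions n ↔ ∀ p ∈ l.parts, ∃ i : ℕ, p = 2 ^ i := by
  simp [binaryPartitions]

theorem card_binaryPartitions_zero : #(binaryPartitions 0) = 1 := by
  rw [card_eq_one]
  exact ⟨default, eq_singleton_iff_unique_mem.mpr ⟨by simp [mem_binaryPartitions],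
    fun l _ => Subsingleton.elim l default⟩⟩

noncomputable def binaryPartitionsWithoutOnes (n : ℕ) : Finset n.Partition :=
  {l ∈ binaryPartitions n | l.parts.count 1 = 0}

theorem card_filter_count_one_binaryPartitions (m c : ℕ) :
    #{l ∈ binaryPartitions (m + c) | l.parts.count 1 = c} = #(binaryPartitionsWithoutOnes m) := by
  symm
  refine card_bij (fun μ _ => μ.addOnes c) ?_ ?_ ?_
  · intro μ hμ
    simp only [binaryPartitionsWithoutOnes, mem_filter, mem_binaryPartitions] at hμ
    simp only [mem_filter, mem_binaryPartitions, Nat.Partition.addOnes, Multiset.mem_add,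
      Multiset.count_add, hμ.2, Multiset.count_replicate_self, zero_add, and_true]
    rintro p (hp | hp)
    · exact hμ.1 p hp
    · exact ⟨0, Multiset.eq_of_mem_replicate hp⟩
  · intro μ _ ν _ h
    exact Nat.Partition.ext (add_right_cancel (congrArg Nat.Partition.parts h))
  · intro l hl
    simp only [mem_filter, mem_binaryPartitions] at hl
    have hsum := l.parts.count_one_add_sum_filter_ne_one
    rw [l.parts_sum] at hsum
    refine ⟨⟨l.parts.filter (· ≠ 1), fun hi => l.parts_pos (Multiset.mem_of_mem_filter hi),
      by omega⟩, ?_, ?_⟩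
    · simp only [binaryPartitionsWithoutOnes, mem_filter, mem_binaryPartitions]
      refine ⟨fun p hp => hl.1 p (Multiset.mem_of_mem_filter hp), ?_⟩
      simp
    · apply Nat.Partition.ext
      have h := Multiset.filter_add_not (· = 1) l.parts
      rw [Multiset.filter_eq', hl.2, add_comm] at h
      exact h

theorem sum_binaryPartitions_count_one (g : ℕ → ℕ) (N : ℕ) :
    ∑ l ∈ binaryPartitions N, g (l.parts.count 1) =
      ∑ p ∈ antidiagonal N, g p.1 * #(binaryPartitionsWithoutOnes p.2) := by
  have hle (l : N.Partition) : l.parts.count 1 < N + 1 := by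
    have := l.parts.count_one_add_sum_filter_ne_one
    rw [l.parts_sum] at this
    omega
  rw [← sum_fiberwise_of_maps_to' (t := range (N + 1)) (fun l _ => mem_range.mpr (hle l)),
    Nat.sum_antidiagonal_eq_sum_range_succ_mk]
  refine sum_congr rfl fun c hc => ?_
  have := card_filter_count_one_binaryPartitions (N - c) c
  rw [Nat.sub_add_cancel (Nat.lt_succ_iff.mp (mem_range.mp hc))] at this
  rw [sum_const, smul_eq_mul, this, mul_comm]

theorem two_dvd_of_mem_binaryPartitionsWithoutOnes {n p : ℕ} {l : n.Partition}
    (hl : l ∈ binaryPartitionsWithoutOnes n) (hp : p ∈ l.parts) : 2 ∣ p := by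
  simp only [binaryPartitionsWithoutOnes, mem_filter, mem_binaryPartitions,
    Multiset.count_eq_zero] at hl
  obtain ⟨i, rfl⟩ := hl.1 p hp
  rcases i with _ | i
  · exact absurd hp (by simpa using hl.2)
  · exact dvd_pow_self 2 i.succ_ne_zero

theorem card_binaryPartitionsWithoutOnes_two_mul (j : ℕ) :
    #(binaryPartitionsWithoutOnes (2 * j)) = #(binaryPartitions j) := by
  symm
  refine card_bij (fun μ _ => μ.double) ?_ ?_ ?_
  · intro μ hμ
    simp only [binaryPartitionsWithoutOnes, mem_filter, mem_binaryPartitions, Nat.Partition.double,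
      Multiset.mem_map, Multiset.count_eq_zero] at hμ ⊢
    refine ⟨?_, ?_⟩
    · rintro _ ⟨x, hx, rfl⟩
      obtain ⟨i, rfl⟩ := hμ x hx
      exact ⟨i + 1, by ring⟩
    · rintro ⟨x, -, hx⟩
      omega
  · intro μ _ ν _ h
    exact Nat.Partition.ext (Multiset.map_injective (mul_right_injective₀ two_ne_zero)
      (congrArg Nat.Partition.parts h))
  · intro l hl
    have hdvd p (hp : p ∈ l.parts) := two_dvd_of_mem_binaryPartitionsWithoutOnes hl hp
    have hmap : (l.parts.map (· / 2)).map (2 * ·) = l.parts := by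
      rw [Multiset.map_map]
      conv_rhs => rw [← Multiset.map_id l.parts]
      exact Multiset.map_congr rfl fun p hp => Nat.mul_div_cancel' (hdvd p hp)
    have hsum := congrArg Multiset.sum hmap
    rw [Multiset.sum_map_mul_left, Multiset.map_id', l.parts_sum] at hsum
    refine ⟨⟨l.parts.map (· / 2), ?_, by omega⟩, ?_, Nat.Partition.ext hmap⟩
    · intro x hx
      obtain ⟨p, hp, rfl⟩ := Multiset.mem_map.mp hx
      have := l.parts_pos hp
      have := hdvd p hp
      omega
    · simp only [binaryPartitionsWithoutOnes, mem_filter, mem_binaryPartitions] at hl ⊢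
      intro x hx
      obtain ⟨p, hp, rfl⟩ := Multiset.mem_map.mp hx
      obtain ⟨i, rfl⟩ := hl.1 p hp
      rcases i with _ | i
      · exact absurd (hdvd 1 hp) (by norm_num)
      · exact ⟨i, by rw [pow_succ, Nat.mul_div_cancel _ two_pos]⟩

theorem binaryPartitionsWithoutOnes_two_mul_add_one (j : ℕ) :
    binaryPartitionsWithoutOnes (2 * j + 1) = ∅ := by
  refine eq_empty_of_forall_notMem fun l hl => ?_
  have : 2 ∣ l.parts.sum :=
    Multiset.dvd_sum fun p hp => two_dvd_of_mem_binaryPartitionsWithoutOnes hl hp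
  rw [l.parts_sum] at this
  omega

namespace ColoredBinary

def weight (S : Finset (ℕ × ℕ)) : ℕ := ∑ p ∈ S, 2 ^ p.1

/-- `(i, c)` stands for the part `2 ^ i` in colour `c`; the part `2 ^ i` may take the `i + k`
colours `c < i + k`. -/
def coloredParts (k n : ℕ) : Finset (Finset (ℕ × ℕ)) :=
  (range (n + 1) ×ˢ range (n + k)).powerset.filter
    fun S => (∀ p ∈ S, p.2 < p.1 + k) ∧ weight S = n

theorem two_pow_le_weight {S : Finset (ℕ × ℕ)} {p : ℕ × ℕ} (hp : p ∈ S) : 2 ^ p.1 ≤ weight S :=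
  single_le_sum (f := fun p : ℕ × ℕ => 2 ^ p.1) (fun _ _ => Nat.zero_le _) hp

theorem mem_coloredParts {k n : ℕ} {S : Finset (ℕ × ℕ)} :
    S ∈ coloredParts k n ↔ (∀ p ∈ S, p.2 < p.1 + k) ∧ weight S = n := by
  refine ⟨fun h => (mem_filter.mp h).2, fun ⟨hc, hw⟩ => mem_filter.mpr ⟨?_, hc, hw⟩⟩
  refine mem_powerset.mpr fun p hp => ?_
  have := (Nat.lt_two_pow_self (n := p.1)).trans_le (hw ▸ two_pow_le_weight hp)
  have := hc p hp
  simp only [mem_product, mem_range]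
  omega

theorem coloredParts_zero_right (k : ℕ) : coloredParts k 0 = {∅} := by
  ext S
  simp only [mem_coloredParts, mem_singleton, weight, sum_eq_zero_iff, pow_eq_zero_iff',
    OfNat.ofNat_ne_zero, ne_eq, false_and, imp_false]
  constructor
  · exact fun ⟨_, h⟩ => eq_empty_of_forall_notMem h
  · rintro rfl; simp

@[simps]
def colorZero : ℕ ↪ ℕ × ℕ := ⟨fun i => (i, 0), fun _ _ h => (Prod.ext_iff.mp h).1⟩

@[simps]
def raiseColor : ℕ × ℕ ↪ ℕ × ℕ :=
  ⟨fun p => (p.1, p.2 + 1), fun _ _ h => by simpa [Prod.ext_iff] using h⟩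

noncomputable def splitColorZero : Finset (ℕ × ℕ) ≃ Finset ℕ × Finset (ℕ × ℕ) where
  toFun S := (S.preimage colorZero colorZero.injective.injOn,
    S.preimage raiseColor raiseColor.injective.injOn)
  invFun T := T.1.map colorZero ∪ T.2.map raiseColor
  left_inv S := by
    ext ⟨i, c⟩
    cases c <;> simp
  right_inv T := by
    ext <;> simp [-preimage_union]

theorem weight_splitColorZero_symm (A : Finset ℕ) (S : Finset (ℕ × ℕ)) :
    weight (splitColorZero.symm (A, S)) = ∑ i ∈ A, 2 ^ i + weight S := by
  rw [weight, splitColorZero, Equiv.coe_fn_symm_mk, sum_union, sum_map, sum_map]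
  · rfl
  · simp [disjoint_left]

theorem splitColorZero_symm_mem_coloredParts {k n : ℕ} {A : Finset ℕ} {S : Finset (ℕ × ℕ)} :
    splitColorZero.symm (A, S) ∈ coloredParts (k + 1) n ↔
      (∀ p ∈ S, p.2 < p.1 + k) ∧ ∑ i ∈ A, 2 ^ i + weight S = n := by
  rw [mem_coloredParts, weight_splitColorZero_symm]
  simp only [splitColorZero, Equiv.coe_fn_symm_mk, forall_mem_union, forall_mem_map,
    colorZero_apply, raiseColor_apply]
  simp [← add_assoc]

theorem card_coloredParts_succ (k n : ℕ) :
    #(coloredParts (k + 1) n) = ∑ p ∈ antidiagonal n, #(coloredParts k p.2) := by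
  rw [← card_sigma]
  -- the parts of colour `0` are the binary digits of `p.1`
  refine card_nbij' (fun S => ⟨(∑ i ∈ (splitColorZero S).1, 2 ^ i, weight (splitColorZero S).2),
      (splitColorZero S).2⟩) (fun x => splitColorZero.symm (x.1.1.bitIndices.toFinset, x.2))
    ?_ ?_ ?_ ?_
  · intro S hS
    obtain ⟨⟨A, S'⟩, rfl⟩ := splitColorZero.symm.surjective S
    obtain ⟨hc, hw⟩ := splitColorZero_symm_mem_coloredParts.mp hS
    simp only [coe_sigma, Set.mem_sigma_iff, mem_coe, Equiv.apply_symm_apply,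
      HasAntidiagonal.mem_antidiagonal, mem_coloredParts]
    exact ⟨hw, hc, trivial⟩
  · rintro ⟨⟨x, m⟩, S⟩ h
    obtain ⟨hxm, hc, hm⟩ : x + m = n ∧ (∀ p ∈ S, p.2 < p.1 + k) ∧ weight S = m := by
      simpa only [mem_coe, mem_sigma, HasAntidiagonal.mem_antidiagonal, mem_coloredParts]
        using h
    rw [mem_coe, splitColorZero_symm_mem_coloredParts]
    exact ⟨hc, by simpa [hm] using hxm⟩
  · intro S _
    simp
  · rintro ⟨⟨x, m⟩, S⟩ h
    obtain ⟨-, hm⟩ := mem_coloredParts.mp (mem_sigma.mp h).2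
    simpa using hm

@[simps]
def raiseIndex : ℕ × ℕ ↪ ℕ × ℕ :=
  ⟨fun p => (p.1 + 1, p.2), fun _ _ h => by simpa [Prod.ext_iff] using h⟩

theorem weight_map_raiseIndex (S : Finset (ℕ × ℕ)) :
    weight (S.map raiseIndex) = 2 * weight S := by
  simp [weight, mul_sum, pow_succ']

theorem map_raiseIndex_mem_coloredParts_zero {n : ℕ} {S : Finset (ℕ × ℕ)} :
    S.map raiseIndex ∈ coloredParts 0 n ↔ (∀ p ∈ S, p.2 < p.1 + 1) ∧ 2 * weight S = n := by
  rw [mem_coloredParts, forall_mem_map, weight_map_raiseIndex]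
  rfl

theorem exists_map_raiseIndex_of_mem_coloredParts_zero {n : ℕ} {S : Finset (ℕ × ℕ)}
    (hS : S ∈ coloredParts 0 n) : ∃ S' : Finset (ℕ × ℕ), S'.map raiseIndex = S := by
  refine ⟨S.preimage raiseIndex raiseIndex.injective.injOn, ?_⟩
  ext ⟨i, c⟩
  have hc := (mem_coloredParts.mp hS).1 (i, c)
  rw [mem_map]
  constructor
  · rintro ⟨p, hp, hpi⟩
    exact hpi ▸ mem_preimage.mp hp
  · intro h
    obtain ⟨i, rfl⟩ := Nat.exists_eq_add_one.mpr (Nat.zero_lt_of_lt (hc h))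
    exact ⟨(i, c), mem_preimage.mpr h, rfl⟩

theorem card_coloredParts_zero_two_mul (j : ℕ) :
    #(coloredParts 0 (2 * j)) = #(coloredParts 1 j) := by
  have : coloredParts 0 (2 * j) = (coloredParts 1 j).image (·.map raiseIndex) := by
    ext S
    rw [mem_image]
    constructor
    · intro hS
      obtain ⟨S', rfl⟩ := exists_map_raiseIndex_of_mem_coloredParts_zero hS
      obtain ⟨hc, hw⟩ := map_raiseIndex_mem_coloredParts_zero.mp hS
      exact ⟨S', mem_coloredParts.mpr ⟨hc, by omega⟩, rfl⟩
    · rintro ⟨S', hS', rfl⟩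
      obtain ⟨hc, hw⟩ := mem_coloredParts.mp hS'
      exact map_raiseIndex_mem_coloredParts_zero.mpr ⟨hc, by rw [hw]⟩
  rw [this, card_image_of_injective _ (map_injective raiseIndex)]

theorem coloredParts_zero_two_mul_add_one (j : ℕ) : coloredParts 0 (2 * j + 1) = ∅ := by
  refine eq_empty_of_forall_notMem fun S hS => ?_
  obtain ⟨S', rfl⟩ := exists_map_raiseIndex_of_mem_coloredParts_zero hS
  have := (map_raiseIndex_mem_coloredParts_zero.mp hS).2
  omega

end ColoredBinary

open ColoredBinary

theorem card_binaryPartitions_eq_sum (N : ℕ) :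
    #(binaryPartitions N) = ∑ p ∈ antidiagonal N, #(binaryPartitionsWithoutOnes p.2) := by
  simpa using sum_binaryPartitions_count_one (fun _ => 1) N

theorem card_coloredParts_zero (m : ℕ) :
    #(coloredParts 0 m) = #(binaryPartitionsWithoutOnes m) := by
  induction m using Nat.strong_induction_on with
  | _ m ih =>
    obtain ⟨i, rfl | rfl⟩ := Nat.even_or_odd' m
    · rw [card_coloredParts_zero_two_mul, card_binaryPartitionsWithoutOnes_two_mul]
      rcases Nat.eq_zero_or_pos i with rfl | hi
      · simp [coloredParts_zero_right, card_binaryPartitions_zero]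
      rw [card_coloredParts_succ, card_binaryPartitions_eq_sum]
      refine sum_congr rfl fun p hp => ih p.2 ?_
      have := mem_antidiagonal.mp hp
      omega
    · rw [coloredParts_zero_two_mul_add_one, binaryPartitionsWithoutOnes_two_mul_add_one,
        card_empty, card_empty]

theorem natCard_eq_card_coloredParts (k n : ℕ) :
    Nat.card {S : Finset (ℕ × ℕ) // (∀ p ∈ S, p.2 ≤ p.1 + k) ∧ (∑ p ∈ S, 2 ^ p.1) = n} =
      #(coloredParts (k + 1) n) := by
  rw [← Nat.card_eq_finsetCard]
  exact Nat.card_congr <| Equiv.subtypeEquivRight fun S => by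
    simp [mem_coloredParts, weight, ← add_assoc]

theorem mk_card_coloredParts (k : ℕ) :
    mk (fun n => (#(coloredParts k n) : ℤ)) =
      (mk 1 : ℤ⟦X⟧) ^ k * mk fun n => (#(binaryPartitionsWithoutOnes n) : ℤ) := by
  induction k with
  | zero => simp [card_coloredParts_zero]
  | succ k ih =>
    rw [pow_succ', mul_assoc, ← ih]
    ext n
    simp [coeff_mul, card_coloredParts_succ]

theorem mk_choose_two : mk (fun n => (n.choose 2 : ℤ)) = X ^ 2 * (mk 1 : ℤ⟦X⟧) ^ 3 := by
  ext n
  rw [mk_one_pow_eq_mk_choose_add ℤ 2, coeff_X_pow_mul', coeff_mk]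
  split_ifs with h
  · rw [coeff_mk, Nat.add_sub_cancel' h]
  · rw [Nat.choose_eq_zero_of_lt (by omega), Nat.cast_zero]

theorem mk_a_eq_X_sq_mul :
    mk (fun n => (a n : ℤ)) = (X : ℤ⟦X⟧) ^ 2 * mk fun n => (#(coloredParts 3 n) : ℤ) := by
  rw [mk_card_coloredParts, ← mul_assoc, ← mk_choose_two]
  ext N
  rw [coeff_mk, a, sum_binaryPartitions_count_one (·.choose 2), coeff_mul]
  simp

theorem stmt_18 (n : ℕ) :
    a (n + 2) = Nat.card {S : Finset (ℕ × ℕ) //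
      (∀ p ∈ S, p.2 ≤ p.1 + 2) ∧ (∑ p ∈ S, 2 ^ p.1) = n} := by
  have h := congrArg (coeff (n + 2)) mk_a_eq_X_sq_mul
  rw [coeff_mk, coeff_X_pow_mul, coeff_mk] at h
  rw [natCard_eq_card_coloredParts]
  exact_mod_cast h
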